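/- arXiv:1503.07632 — 2 statements merged into one kernel-verified Lean document; each statement's English description precedes it below -/
import Mathlib

section
/- Define the modified fractional integral Î₋^μ u(x) = (1+x)^{-μ} I₋^μ u(x) for μ > 0. Then for every n ∈ ℕ₀, Î₋^μ P_n(x) = [n!/Γ(n+μ+1)] P_n^{(-μ,μ)}(x), which is a polynomial of degree n; consequently, Î₋^μ maps the space of polynomials of degree ≤ N into itself. -/
/-!
The Riemann–Liouville integral of a power is a beta integral:
`∫_{-1}^x (1+y)^m (x-y)^(μ-1) dy = m! Γ(μ) / Γ(m+μ+1) · (1+x)^(m+μ)`,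
so `Î₋^μ` acts diagonally on the basis `(1+x)^m`, multiplying `(1+x)^m` by `m!/Γ(m+μ+1)`;
in particular it does not raise degrees. The symmetry `P_n^{(α,β)}(-x) = (-1)^n P_n^{(β,α)}(x)`,
a Chu–Vandermonde computation, turns the hypergeometric series in `(x-1)/2` into an expansion
about `x = -1`. In that basis the coefficients of `P_n = P_n^{(0,0)}` and of `P_n^{(-μ,μ)}`
differ, term by term, by exactly the factor `m!/Γ(m+μ+1)` up to the constant `n!/Γ(n+μ+1)`.
-/

open Real Filter Set

/-- Left-sided Riemann–Liouville fractional integral of order `ρ` with base point `a`. -/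
noncomputable def fracInt (a ρ : ℝ) (u : ℝ → ℝ) (x : ℝ) : ℝ :=
  (1 / Real.Gamma ρ) * ∫ y in a..x, u y * (x - y) ^ (ρ - 1)

/-- Left-sided Caputo fractional derivative of order `μ ∈ (k-1,k)` with base point `a`. -/
noncomputable def caputoD (k : ℕ) (μ a : ℝ) (u : ℝ → ℝ) : ℝ → ℝ :=
  fracInt a ((k : ℝ) - μ) (iteratedDeriv k u)

/-- Left-sided Riemann–Liouville fractional derivative of order `μ ∈ (k-1,k)` with base point `a`. -/
noncomputable def rlD (k : ℕ) (μ a : ℝ) (u : ℝ → ℝ) : ℝ → ℝ :=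
  iteratedDeriv k (fracInt a ((k : ℝ) - μ) u)

/-- Jacobi polynomial `P_n^{(α,β)}` for general real parameters, via the terminating
hypergeometric representation. -/
noncomputable def jacobiP (n : ℕ) (α β : ℝ) (x : ℝ) : ℝ :=
  (1 / (n.factorial : ℝ)) * ∑ m ∈ Finset.range (n + 1),
    (n.choose m : ℝ) * (∏ i ∈ Finset.range (n - m), (α + m + 1 + i)) *
    (∏ i ∈ Finset.range m, (α + β + n + 1 + i)) * ((x - 1) / 2) ^ m

/-- Legendre polynomial. -/
noncomputable def legendreP (n : ℕ) (x : ℝ) : ℝ := jacobiP n 0 0 x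

/-- Modified fractional integral `Î₋^μ u(x) = (1+x)^{-μ} I₋^μ u(x)`. -/
noncomputable def fracIntHat (μ : ℝ) (u : ℝ → ℝ) (x : ℝ) : ℝ :=
  (1 + x) ^ (-μ) * fracInt (-1) μ u x

open Finset Polynomial

lemma prod_range_add_eq_neg_one_pow_mul_smeval (k : ℕ) (a : ℝ) :
    ∏ i ∈ range k, (a + i) = (-1) ^ k * (descPochhammer ℤ k).smeval (-a) := by
  induction k with
  | zero => simp [smeval_one]
  | succ k ih =>
    rw [prod_range_succ, ih, descPochhammer_succ_right, smeval_mul, smeval_sub, smeval_X,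
      smeval_natCast]
    simp only [pow_one, pow_zero, nsmul_eq_mul, mul_one]
    ring

-- Chu–Vandermonde for rising factorials.
lemma sum_choose_mul_prod_range_add (N : ℕ) (a b : ℝ) :
    ∑ s ∈ range (N + 1), (N.choose s : ℝ) * (∏ i ∈ range s, (a + i)) *
      ∏ i ∈ range (N - s), (b + i) = ∏ i ∈ range N, (a + b + i) := by
  rw [prod_range_add_eq_neg_one_pow_mul_smeval, neg_add,
    Ring.descPochhammer_smeval_add _ (Commute.all _ _),
    Nat.sum_antidiagonal_eq_sum_range_succ (fun i j ↦ (N.choose i : ℝ) *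
      ((descPochhammer ℤ i).smeval (-a) * (descPochhammer ℤ j).smeval (-b))), mul_sum]
  refine sum_congr rfl fun s hs ↦ ?_
  rw [prod_range_add_eq_neg_one_pow_mul_smeval, prod_range_add_eq_neg_one_pow_mul_smeval,
    ← Nat.add_sub_cancel' (mem_range_succ_iff.mp hs), pow_add, Nat.add_sub_cancel_left]
  ring

lemma prod_range_add_eq_neg_one_pow_mul_prod_range_add (L : ℕ) (d : ℝ) :
    ∏ i ∈ range L, (d + i) = (-1) ^ L * ∏ i ∈ range L, (-(d + L - 1) + i) := by
  have h := prod_neg (s := range L) fun i : ℕ ↦ -(d + L - 1) + i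
  rw [card_range] at h
  rw [← h, ← prod_range_reflect (fun i : ℕ ↦ d + i)]
  refine prod_congr rfl fun i hi ↦ ?_
  have hi : i + 1 ≤ L := mem_range.mp hi
  rw [Nat.cast_sub (by omega), Nat.cast_sub (by omega)]
  push_cast
  ring

lemma sum_neg_one_pow_mul_choose_mul_prod_range_add (N : ℕ) (a b : ℝ) :
    ∑ s ∈ range (N + 1), (-1) ^ s * (N.choose s : ℝ) * (∏ i ∈ range (N - s), (a + s + i)) *
      ∏ i ∈ range s, (b + i) = (-1) ^ N * ∏ i ∈ range N, (b - a - N + 1 + i) := by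
  rw [show b - a - N + 1 = b + -(a + N - 1) by ring, ← sum_choose_mul_prod_range_add, mul_sum]
  refine sum_congr rfl fun s hs ↦ ?_
  have hsN := mem_range_succ_iff.mp hs
  rw [prod_range_add_eq_neg_one_pow_mul_prod_range_add, Nat.cast_sub hsN,
    ← Nat.add_sub_cancel' hsN, pow_add, Nat.add_sub_cancel_left]
  ring_nf

lemma sum_choose_mul_jacobiP_coeff (n k : ℕ) (hk : k ≤ n) (α β : ℝ) :
    ∑ m ∈ range (n + 1), (n.choose m : ℝ) * (∏ i ∈ range (n - m), (α + m + 1 + i)) *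
      (∏ i ∈ range m, (α + β + n + 1 + i)) * (-1) ^ m * (m.choose k : ℝ)
      = (-1) ^ n * ((n.choose k : ℝ) * (∏ i ∈ range (n - k), (β + k + 1 + i)) *
      ∏ i ∈ range k, (α + β + n + 1 + i)) := by
  obtain ⟨N, rfl⟩ := Nat.exists_eq_add_of_le hk
  rw [show k + N + 1 = k + (N + 1) by ring, sum_range_add, Nat.add_sub_cancel_left,
    sum_eq_zero fun m hm ↦ by rw [Nat.choose_eq_zero_of_lt (mem_range.mp hm)]; simp, zero_add]
  have hterm : ∀ s ∈ range (N + 1),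
      ((k + N).choose (k + s) : ℝ) * (∏ i ∈ range (k + N - (k + s)), (α + ↑(k + s) + 1 + i)) *
        (∏ i ∈ range (k + s), (α + β + ↑(k + N) + 1 + i)) * (-1) ^ (k + s) * ((k + s).choose k : ℝ)
      = (-1) ^ k * ((k + N).choose k : ℝ) * (∏ i ∈ range k, (α + β + ↑(k + N) + 1 + i)) *
        ((-1) ^ s * (N.choose s : ℝ) * (∏ i ∈ range (N - s), ((α + k + 1) + s + i)) *
          ∏ i ∈ range s, ((α + β + ↑(k + N) + 1 + k) + i)) := by
    intro s hs
    have hchoose : ((k + N).choose (k + s) : ℝ) * ((k + s).choose k : ℝ)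
        = ((k + N).choose k : ℝ) * (N.choose s : ℝ) := by
      have h := Nat.choose_mul (n := k + N) (k := k + s) (s := k) (by simp at hs; omega)
      rw [Nat.add_sub_cancel_left, Nat.add_sub_cancel_left] at h
      exact_mod_cast h
    have hprod : ∏ i ∈ range (N - s), (α + ↑(k + s) + 1 + i)
        = ∏ i ∈ range (N - s), ((α + k + 1) + s + i) :=
      prod_congr rfl fun _ _ ↦ by push_cast; ring
    rw [Nat.add_sub_add_left, hprod, prod_range_add, pow_add]
    simp only [Nat.cast_add, ← add_assoc]
    linear_combination ((-1) ^ k * (-1) ^ s * (∏ i ∈ range (N - s), (α + k + 1 + s + i)) *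
      (∏ i ∈ range k, (α + β + k + N + 1 + i)) * ∏ i ∈ range s, (α + β + k + N + 1 + k + i)) *
      hchoose
  rw [sum_congr rfl hterm, ← mul_sum, sum_neg_one_pow_mul_choose_mul_prod_range_add, pow_add]
  have hprod : ∏ i ∈ range N, (α + β + ↑(k + N) + 1 + k - (α + k + 1) - N + 1 + i)
      = ∏ i ∈ range N, (β + k + 1 + i) :=
    prod_congr rfl fun _ _ ↦ by push_cast; ring
  rw [hprod]
  ring

theorem jacobiP_neg (n : ℕ) (α β x : ℝ) :
    jacobiP n α β (-x) = (-1) ^ n * jacobiP n β α x := by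
  have hpow : ∀ m ∈ range (n + 1), ((-x - 1) / 2) ^ m
      = ∑ k ∈ range (n + 1), (-1) ^ m * (m.choose k : ℝ) * ((x - 1) / 2) ^ k := by
    intro m hm
    rw [show (-x - 1) / 2 = -((x - 1) / 2 + 1) by ring, neg_pow, add_pow, mul_sum]
    refine sum_subset (range_subset_range.mpr (by simpa using hm)) (fun k _ hk ↦ ?_) |>.trans
      (sum_congr rfl fun k _ ↦ by ring)
    rw [Nat.choose_eq_zero_of_lt (by simpa using hk)]
    simp
  simp only [jacobiP, add_comm β α]
  rw [sum_congr rfl fun m hm ↦ by rw [hpow m hm, mul_sum], sum_comm, mul_sum, mul_sum, mul_sum]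
  refine sum_congr rfl fun k hk ↦ ?_
  simp only [← mul_assoc]
  rw [← sum_mul, sum_choose_mul_jacobiP_coeff n k (mem_range_succ_iff.mp hk)]
  ring

theorem jacobiP_eq_sum_mul_add_one_pow (n : ℕ) (α β x : ℝ) :
    jacobiP n α β x = ∑ m ∈ range (n + 1), (-1) ^ n / n.factorial * ((n.choose m : ℝ) *
      (∏ i ∈ range (n - m), (β + m + 1 + i)) * (∏ i ∈ range m, (β + α + n + 1 + i)) *
      (-1 / 2) ^ m) * (x + 1) ^ m := by
  rw [← neg_neg x, jacobiP_neg, neg_neg, jacobiP, mul_sum, mul_sum]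
  refine sum_congr rfl fun m _ ↦ ?_
  rw [show (-x - 1) / 2 = -1 / 2 * (x + 1) by ring, mul_pow]
  ring

lemma prod_range_add_mul_Gamma {c : ℝ} (hc : 0 < c) (k : ℕ) :
    (∏ i ∈ range k, (c + i)) * Gamma c = Gamma (c + k) := by
  induction k with
  | zero => simp
  | succ k ih =>
    rw [prod_range_succ, mul_right_comm, ih, Nat.cast_succ, ← add_assoc,
      Gamma_add_one (by positivity), mul_comm]

-- Both sides equal `n! / Γ(μ + m + 1)`.
lemma factorial_mul_prod_div_Gamma {μ : ℝ} (hμ : 0 ≤ μ) {m n : ℕ} (hmn : m ≤ n) :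
    m.factorial * (∏ i ∈ range (n - m), (m + 1 + i : ℝ)) / Gamma (μ + m + 1)
      = n.factorial * (∏ i ∈ range (n - m), (μ + m + 1 + i)) / Gamma (n + μ + 1) := by
  have hcast : (m + 1 + (n - m : ℕ) : ℝ) = n + 1 := by push_cast [hmn]; ring
  have hfac : (m.factorial : ℝ) * ∏ i ∈ range (n - m), (m + 1 + i : ℝ) = n.factorial := by
    rw [← Gamma_nat_eq_factorial, ← Gamma_nat_eq_factorial, mul_comm,
      prod_range_add_mul_Gamma (by positivity), hcast]
  have hΓ : (∏ i ∈ range (n - m), (μ + m + 1 + i)) * Gamma (μ + m + 1) = Gamma (n + μ + 1) := by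
    rw [prod_range_add_mul_Gamma (by positivity)]
    congr 1
    push_cast [hmn]
    ring
  have := (Gamma_pos_of_pos (by positivity : 0 < μ + m + 1)).ne'
  rw [hfac, ← hΓ]
  field_simp

section FractionalIntegral

open intervalIntegral MeasureTheory

variable {μ : ℝ}

lemma intervalIntegrable_sub_rpow {r : ℝ} (hr : -1 < r) (x a b : ℝ) :
    IntervalIntegrable (fun y ↦ (x - y) ^ r) volume a b := by
  simpa using (intervalIntegrable_rpow' hr (a := x - a) (b := x - b)).comp_sub_left x

lemma integral_sub_rpow (hμ : 0 < μ) (a x : ℝ) :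
    ∫ y in a..x, (x - y) ^ (μ - 1) = (x - a) ^ μ / μ := by
  rw [integral_comp_sub_left (fun t ↦ t ^ (μ - 1)), integral_rpow (by left; linarith), sub_self,
    sub_add_cancel, zero_rpow hμ.ne', sub_zero]

lemma integral_sub_pow_succ_mul_sub_rpow (hμ : 0 < μ) (a x : ℝ) (m : ℕ) :
    ∫ y in a..x, (y - a) ^ (m + 1) * (x - y) ^ (μ - 1)
      = (m + 1) / μ * ∫ y in a..x, (y - a) ^ m * (x - y) ^ μ := by
  have hv : ∀ y ∈ Ioo (min a x) (max a x),
      HasDerivAt (fun y ↦ -(x - y) ^ μ / μ) ((x - y) ^ (μ - 1)) y := by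
    intro y hy
    have hxy : x - y ≠ 0 := by
      rw [sub_ne_zero]
      rintro rfl
      simp only [Set.mem_Ioo, min_lt_iff, lt_max_iff, lt_self_iff_false, or_false] at hy
      linarith [hy.1, hy.2]
    refine (((hasDerivAt_id' y).const_sub x).rpow_const (p := μ) (Or.inl hxy)).neg.div_const μ
      |>.congr_deriv ?_
    field_simp
  have hibp := integral_mul_deriv_eq_deriv_mul_of_hasDerivAt
    (u := fun y ↦ (y - a) ^ (m + 1)) (u' := fun y ↦ (m + 1 : ℝ) * (y - a) ^ m)
    (v := fun y ↦ -(x - y) ^ μ / μ)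
    (by fun_prop)
    (((continuous_const.sub continuous_id).rpow_const fun _ ↦ Or.inr hμ.le).neg.div_const
      μ).continuousOn
    (fun y _ ↦ by simpa using ((hasDerivAt_id y).sub_const a).fun_pow (m + 1)) hv
    ((by fun_prop : Continuous fun y : ℝ ↦ (m + 1 : ℝ) * (y - a) ^ m).intervalIntegrable a x)
    (intervalIntegrable_sub_rpow (by linarith) x a x)
  rw [hibp, sub_self, sub_self, zero_rpow hμ.ne', zero_pow (Nat.succ_ne_zero m),
    ← intervalIntegral.integral_const_mul]
  simp only [neg_zero, zero_div, mul_zero, zero_mul, sub_zero, zero_sub,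
    ← intervalIntegral.integral_neg]
  congr 1 with y
  ring

theorem integral_sub_pow_mul_sub_rpow (m : ℕ) (hμ : 0 < μ) (a x : ℝ) :
    ∫ y in a..x, (y - a) ^ m * (x - y) ^ (μ - 1)
      = m.factorial * Gamma μ / Gamma (μ + m + 1) * (x - a) ^ (μ + m) := by
  induction m generalizing μ with
  | zero =>
    simp only [pow_zero, one_mul, integral_sub_rpow hμ, Nat.factorial_zero, Nat.cast_one,
      CharP.cast_eq_zero, add_zero, Gamma_add_one hμ.ne']
    field_simp
  | succ m ih =>
    have h := ih (by linarith : 0 < μ + 1)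
    rw [add_sub_cancel_right] at h
    rw [integral_sub_pow_succ_mul_sub_rpow hμ, h, Gamma_add_one hμ.ne', Nat.factorial_succ,
      show μ + 1 + m + 1 = μ + ↑(m + 1) + 1 by push_cast; ring,
      show μ + 1 + m = μ + ↑(m + 1) by push_cast; ring]
    have := (Gamma_pos_of_pos hμ).ne'
    field_simp
    push_cast
    ring

lemma fracIntHat_sum_mul_add_one_pow (hμ : 0 < μ) (b : ℕ → ℝ) (M : ℕ) {x : ℝ} (hx : -1 < x) :
    fracIntHat μ (fun y ↦ ∑ m ∈ range M, b m * (y + 1) ^ m) x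
      = ∑ m ∈ range M, b m * (m.factorial / Gamma (μ + m + 1)) * (x + 1) ^ m := by
  have hint : ∀ m ∈ range M,
      IntervalIntegrable (fun y ↦ b m * ((y - -1) ^ m * (x - y) ^ (μ - 1))) volume (-1) x :=
    fun m _ ↦ ((intervalIntegrable_sub_rpow (by linarith) x (-1) x).continuousOn_mul
      (by fun_prop : Continuous fun y : ℝ ↦ (y - -1) ^ m).continuousOn).const_mul (b m)
  have hpos : 0 < 1 + x := by linarith
  have hΓ := (Gamma_pos_of_pos hμ).ne'
  rw [fracIntHat, fracInt, integral_congr fun y _ ↦ show (∑ m ∈ range M, b m * (y + 1) ^ m) *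
      (x - y) ^ (μ - 1) = ∑ m ∈ range M, b m * ((y - -1) ^ m * (x - y) ^ (μ - 1)) by
    rw [sum_mul]; exact sum_congr rfl fun m _ ↦ by ring,
    integral_finsetSum hint, mul_sum, mul_sum]
  refine sum_congr rfl fun m _ ↦ ?_
  rw [intervalIntegral.integral_const_mul, integral_sub_pow_mul_sub_rpow m hμ, sub_neg_eq_add,
    add_comm x 1, rpow_add hpos, rpow_neg hpos.le, rpow_natCast]
  field_simp

end FractionalIntegral

lemma natDegree_sum_range_C_mul_X_pow_le {R : Type*} [Semiring R] (a : ℕ → R) (N : ℕ) :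
    (∑ m ∈ range (N + 1), C (a m) * X ^ m).natDegree ≤ N :=
  natDegree_sum_le_of_forall_le _ _ fun _ hm ↦
    (natDegree_C_mul_X_pow_le _ _).trans (mem_range_succ_iff.mp hm)

lemma natDegree_sum_range_C_mul_X_pow {R : Type*} [Semiring R] (a : ℕ → R) {N : ℕ}
    (h : a N ≠ 0) : (∑ m ∈ range (N + 1), C (a m) * X ^ m).natDegree = N :=
  natDegree_eq_of_le_of_coeff_ne_zero (natDegree_sum_range_C_mul_X_pow_le a N)
    (by simpa [finsetSum_coeff, coeff_C_mul_X_pow] using h)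

theorem exists_natDegree_eq_jacobiP (n : ℕ) (α β : ℝ)
    (h : ∏ i ∈ range n, (α + β + n + 1 + i) ≠ 0) :
    ∃ q : ℝ[X], q.natDegree = n ∧ ∀ x, jacobiP n α β x = q.eval x := by
  set a : ℕ → ℝ := fun m ↦ 1 / n.factorial * ((n.choose m : ℝ) *
    (∏ i ∈ range (n - m), (α + m + 1 + i)) * ∏ i ∈ range m, (α + β + n + 1 + i))
  refine ⟨(∑ m ∈ range (n + 1), C (a m) * X ^ m).comp (C (1 / 2) * (X - C 1)), ?_, fun x ↦ ?_⟩
  · have ha : a n ≠ 0 := by simp [a, h, Nat.factorial_ne_zero]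
    rw [natDegree_comp, natDegree_sum_range_C_mul_X_pow a ha,
      natDegree_C_mul (by norm_num), natDegree_X_sub_C, mul_one]
  · simp only [jacobiP, a, eval_comp, eval_finsetSum, eval_mul, eval_C, eval_pow, eval_sub,
      eval_X, mul_sum]
    refine sum_congr rfl fun m _ ↦ ?_
    ring

theorem exists_natDegree_le_fracIntHat_eq {μ : ℝ} (hμ : 0 < μ) (p : ℝ[X]) :
    ∃ q : ℝ[X], q.natDegree ≤ p.natDegree ∧
      ∀ x ∈ Ioi (-1 : ℝ), fracIntHat μ (fun y ↦ p.eval y) x = q.eval x := by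
  set t := taylor (-1) p
  set d := p.natDegree
  have hp : (fun y ↦ p.eval y) = fun y ↦ ∑ m ∈ range (d + 1), t.coeff m * (y + 1) ^ m := by
    ext y
    rw [← eval_eq_sum_range' (by rw [natDegree_taylor]; omega), taylor_eval, add_neg_cancel_right]
  refine ⟨taylor 1 (∑ m ∈ range (d + 1),
    C (t.coeff m * (m.factorial / Gamma (μ + m + 1))) * X ^ m), ?_, fun x hx ↦ ?_⟩
  · rw [natDegree_taylor]
    exact natDegree_sum_range_C_mul_X_pow_le _ d
  · simp only [hp, fracIntHat_sum_mul_add_one_pow hμ _ _ hx, taylor_eval, eval_finsetSum,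
      eval_mul, eval_C, eval_pow, eval_X]

theorem stmt12 (μ : ℝ) (hμ : 0 < μ) :
    (∀ n : ℕ, ∀ x ∈ Set.Ioo (-1 : ℝ) 1,
      fracIntHat μ (legendreP n) x
        = (n.factorial : ℝ) / Real.Gamma (n + μ + 1) * jacobiP n (-μ) μ x) ∧
    (∀ n : ℕ, ∃ q : Polynomial ℝ, q.natDegree = n ∧ ∀ x : ℝ, jacobiP n (-μ) μ x = q.eval x) ∧
    (∀ N : ℕ, ∀ p : Polynomial ℝ, p.natDegree ≤ N →
      ∃ q : Polynomial ℝ, q.natDegree ≤ N ∧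
        ∀ x ∈ Set.Ioo (-1 : ℝ) 1, fracIntHat μ (fun y => p.eval y) x = q.eval x) := by
  refine ⟨fun n x hx ↦ ?_, fun n ↦ exists_natDegree_eq_jacobiP n (-μ) μ ?_, fun N p hp ↦ ?_⟩
  · have hleg : legendreP n = _ := funext (jacobiP_eq_sum_mul_add_one_pow n 0 0)
    rw [hleg, fracIntHat_sum_mul_add_one_pow hμ _ _ hx.1, jacobiP_eq_sum_mul_add_one_pow, mul_sum]
    refine sum_congr rfl fun m hm ↦ ?_
    simp only [zero_add, add_neg_cancel]
    linear_combination ((-1) ^ n / n.factorial * (n.choose m : ℝ) *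
      (∏ i ∈ range m, (n + 1 + i : ℝ)) * (-1 / 2) ^ m * (x + 1) ^ m) *
      factorial_mul_prod_div_Gamma hμ.le (mem_range_succ_iff.mp hm)
  · exact prod_ne_zero_iff.mpr fun i _ ↦ by rw [neg_add_cancel, zero_add]; positivity
  · obtain ⟨q, hq, hpq⟩ := exists_natDegree_le_fracIntHat_eq hμ p
    exact ⟨q, hq.trans hp, fun x hx ↦ hpq x hx.1⟩
end

section
/- For β > -1, μ > 0, and n ∈ ℕ₀, the modified fractional integral satisfies Î₋^μ { (1+x) P_n^{(μ,1)}(x) } = [(n+1)!/Γ(n+μ+2)] (1+x) P_n^{(0,1+μ)}(x); in particular, if p is a polynomial of degree ≤ N with p(-1) = 0, then Î₋^μ p is a polynomial of degree ≤ N vanishing at x = -1. -/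
open Real Filter Set

/-! The power rule `Î^μ (1+x)^k = k!/Γ(k+1+μ) (1+x)^k`, a Beta integral, reduces the theorem to
the expansion of Jacobi polynomials in powers of `1 + x`. That expansion comes from the symmetry
`P_n^{(α,β)}(x) = (-1)^n P_n^{(β,α)}(-x)`, which on coefficients is the Chu–Vandermonde identity
for falling factorials. The coefficients of `(1+x)^(k+1)` on the two sides then agree because
`Γ(z + j) = Γ(z) (z)_j` turns both `(k+1)! (k+2)_(n-k)` and `Γ(μ+k+2) (μ+k+2)_(n-k)` into
their values at `k = n`. -/

open Finset Polynomial

lemma descPochhammer_smeval_eq_prod_range (k : ℕ) (r : ℝ) :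
    (descPochhammer ℤ k).smeval r = ∏ j ∈ range k, (r - j) := by
  rw [← aeval_eq_smeval, aeval_def, eval₂_eq_eval_map, descPochhammer_map,
    descPochhammer_eval_eq_prod_range]

lemma prod_range_add_sub_eq_sum_choose_mul (x y : ℝ) (k : ℕ) :
    ∏ j ∈ range k, (x + y - j) = ∑ i ∈ range (k + 1),
      (k.choose i : ℝ) * ((∏ j ∈ range i, (x - j)) * ∏ j ∈ range (k - i), (y - j)) := by
  simp only [← descPochhammer_smeval_eq_prod_range]
  rw [Ring.descPochhammer_smeval_add k (Commute.all x y),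
    Nat.sum_antidiagonal_eq_sum_range_succ (fun i j => (k.choose i : ℝ) *
      ((descPochhammer ℤ i).smeval x * (descPochhammer ℤ j).smeval y))]

lemma prod_range_sub_eq_prod_range_add (b : ℝ) (j : ℕ) :
    ∏ i ∈ range j, (b - i) = ∏ i ∈ range j, (b - j + 1 + i) := by
  rw [← prod_range_reflect]
  refine prod_congr rfl fun i hi => ?_
  have hij := mem_range.1 hi
  rw [Nat.cast_sub (by omega), Nat.cast_sub (by omega)]
  push_cast
  ring

lemma prod_range_neg_sub (a : ℝ) (j : ℕ) :
    ∏ i ∈ range j, (-a - i) = (-1) ^ j * ∏ i ∈ range j, (a + i) := by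
  simpa only [card_range, neg_add'] using prod_neg (s := range j) fun i : ℕ => a + i

lemma sum_neg_one_pow_mul_choose_mul_choose_mul_prod (α β : ℝ) {n m : ℕ} (hm : m ≤ n) :
    ∑ k ∈ range (n + 1), (-1 : ℝ) ^ k * (n.choose k) * (k.choose m) *
        ((∏ i ∈ range (n - k), (β + k + 1 + i)) * ∏ i ∈ range k, (β + α + n + 1 + i)) =
      (-1) ^ n * n.choose m *
        ((∏ i ∈ range (n - m), (α + m + 1 + i)) * ∏ i ∈ range m, (α + β + n + 1 + i)) := by
  obtain ⟨K, rfl⟩ := Nat.exists_eq_add_of_le hm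
  -- With `k = m + s`, the sum over `s` is Chu–Vandermonde for falling factorials at
  -- `-(L + m)` and `β + n`, whose sum is `-(α + m + 1)`.
  set L : ℝ := β + α + ↑(m + K) + 1
  have hterm : ∀ s ∈ range (K + 1),
      (-1 : ℝ) ^ (m + s) * ((m + K).choose (m + s)) * ((m + s).choose m) *
        ((∏ i ∈ range (m + K - (m + s)), (β + ↑(m + s) + 1 + i)) *
          ∏ i ∈ range (m + s), (L + i)) =
      (-1) ^ m * ((m + K).choose m) * (∏ i ∈ range m, (L + i)) *
        ((K.choose s) * ((∏ j ∈ range s, (-(L + m) - j)) *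
          ∏ j ∈ range (K - s), (β + ↑(m + K) - j))) := by
    intro s hs
    have hsK : s ≤ K := Nat.lt_succ_iff.1 (mem_range.1 hs)
    have hchoose : (((m + K).choose (m + s) * (m + s).choose m : ℕ) : ℝ) =
        ((m + K).choose m * K.choose s : ℕ) := by
      rw [Nat.choose_mul (Nat.le_add_right m s), Nat.add_sub_cancel_left,
        Nat.add_sub_cancel_left]
    have hB : ∏ i ∈ range (m + K - (m + s)), (β + ↑(m + s) + 1 + i) =
        ∏ j ∈ range (K - s), (β + ↑(m + K) - j) := by
      rw [prod_range_sub_eq_prod_range_add, Nat.add_sub_add_left]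
      refine prod_congr rfl fun i _ => ?_
      push_cast [Nat.cast_sub hsK]
      ring
    have hL : ∏ i ∈ range (m + s), (L + i) =
        (∏ i ∈ range m, (L + i)) * ∏ i ∈ range s, (L + m + i) := by
      rw [prod_range_add]
      push_cast
      simp only [add_assoc]
    push_cast at hchoose
    rw [hB, hL, prod_range_neg_sub, pow_add]
    linear_combination (-1 : ℝ) ^ m * (-1) ^ s * (∏ i ∈ range m, (L + i)) *
      (∏ i ∈ range s, (L + m + i)) * (∏ j ∈ range (K - s), (β + ↑(m + K) - j)) * hchoose
  rw [show m + K + 1 = m + (K + 1) by omega, sum_range_add,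
    sum_eq_zero fun k hk => by simp [Nat.choose_eq_zero_of_lt (mem_range.1 hk)], zero_add,
    sum_congr rfl hterm, ← mul_sum, ← prod_range_add_sub_eq_sum_choose_mul,
    show -(L + m) + (β + ↑(m + K)) = -(α + m + 1) by simp only [L]; push_cast; ring,
    prod_range_neg_sub, Nat.add_sub_cancel_left, pow_add]
  simp only [L]
  push_cast
  ring_nf

lemma neg_add_one_pow_eq_sum_range (t : ℝ) {n k : ℕ} (hk : k ≤ n) :
    (-(t + 1)) ^ k = ∑ m ∈ range (n + 1), (-1) ^ k * (k.choose m : ℝ) * t ^ m := by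
  rw [neg_pow, add_pow, mul_sum]
  refine (sum_subset (range_subset_range.2 (by omega)) fun m _ hm => ?_).trans
    (sum_congr rfl fun m _ => by ring)
  simp [Nat.choose_eq_zero_of_lt (not_le.1 (mt Nat.lt_succ_iff.2 (mt mem_range.2 hm)))]

theorem jacobiP_eq_neg_one_pow_mul_jacobiP_neg (n : ℕ) (α β x : ℝ) :
    jacobiP n α β x = (-1) ^ n * jacobiP n β α (-x) := by
  unfold jacobiP
  set t := (x - 1) / 2
  have ht : (-x - 1) / 2 = -(t + 1) := by simp only [t]; ring
  have hsq : (-1 : ℝ) ^ n * (-1) ^ n = 1 := by rw [← mul_pow]; norm_num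
  rw [ht]
  calc 1 / (n.factorial : ℝ) * ∑ m ∈ range (n + 1), (n.choose m : ℝ) *
        (∏ i ∈ range (n - m), (α + m + 1 + i)) * (∏ i ∈ range m, (α + β + n + 1 + i)) * t ^ m
      = 1 / (n.factorial : ℝ) * ∑ m ∈ range (n + 1), (-1) ^ n * ((-1) ^ n * n.choose m *
        ((∏ i ∈ range (n - m), (α + m + 1 + i)) * ∏ i ∈ range m, (α + β + n + 1 + i))) *
          t ^ m := by
        congr 1
        refine sum_congr rfl fun m _ => ?_
        linear_combination (-(n.choose m : ℝ) * (∏ i ∈ range (n - m), (α + m + 1 + i)) *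
          (∏ i ∈ range m, (α + β + n + 1 + i)) * t ^ m) * hsq
    _ = 1 / (n.factorial : ℝ) * ∑ m ∈ range (n + 1), (-1) ^ n * (∑ k ∈ range (n + 1),
        (-1 : ℝ) ^ k * (n.choose k) * (k.choose m) *
          ((∏ i ∈ range (n - k), (β + k + 1 + i)) * ∏ i ∈ range k, (β + α + n + 1 + i))) *
          t ^ m := by
        congr 1
        refine sum_congr rfl fun m hm => ?_
        rw [sum_neg_one_pow_mul_choose_mul_choose_mul_prod α β
          (Nat.lt_succ_iff.1 (mem_range.1 hm))]
    _ = _ := by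
        rw [sum_congr rfl fun k hk =>
          congrArg (_ * ·) (neg_add_one_pow_eq_sum_range t (Nat.lt_succ_iff.1 (mem_range.1 hk)))]
        simp only [mul_sum, sum_mul]
        rw [sum_comm]
        refine sum_congr rfl fun m _ => sum_congr rfl fun k _ => by ring

noncomputable def jacobiCoeff (n : ℕ) (α β : ℝ) (k : ℕ) : ℝ :=
  (-1) ^ n / n.factorial * n.choose k * (∏ i ∈ range (n - k), (β + k + 1 + i)) *
    (∏ i ∈ range k, (β + α + n + 1 + i)) * (-1 / 2) ^ k

lemma jacobiP_eq_sum_jacobiCoeff_mul_one_add_pow (n : ℕ) (α β x : ℝ) :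
    jacobiP n α β x = ∑ k ∈ range (n + 1), jacobiCoeff n α β k * (1 + x) ^ k := by
  rw [jacobiP_eq_neg_one_pow_mul_jacobiP_neg, jacobiP, mul_sum, mul_sum]
  refine sum_congr rfl fun k _ => ?_
  rw [jacobiCoeff, show (-x - 1) / 2 = -1 / 2 * (1 + x) by ring, mul_pow]
  ring

lemma integral_rpow_mul_one_sub_rpow {a b : ℝ} (ha : 0 < a) (hb : 0 < b) :
    ∫ t in (0 : ℝ)..1, t ^ (a - 1) * (1 - t) ^ (b - 1) = Gamma a * Gamma b / Gamma (a + b) := by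
  have hbeta : Complex.betaIntegral a b =
      ((∫ t in (0 : ℝ)..1, t ^ (a - 1) * (1 - t) ^ (b - 1) : ℝ) : ℂ) := by
    rw [Complex.betaIntegral, ← intervalIntegral.integral_ofReal]
    refine intervalIntegral.integral_congr fun t ht => ?_
    rw [Set.uIcc_of_le zero_le_one] at ht
    simp only [Complex.ofReal_mul, Complex.ofReal_cpow ht.1,
      Complex.ofReal_cpow (sub_nonneg.2 ht.2)]
    push_cast
    rfl
  have h := Complex.Gamma_mul_Gamma_eq_betaIntegral (s := a) (t := b) (by simpa) (by simpa)
  rw [hbeta, ← Complex.ofReal_add, Complex.Gamma_ofReal, Complex.Gamma_ofReal,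
    Complex.Gamma_ofReal, ← Complex.ofReal_mul, ← Complex.ofReal_mul, Complex.ofReal_inj] at h
  rw [h, mul_div_cancel_left₀ _ (Gamma_pos_of_pos (add_pos ha hb)).ne']

lemma Gamma_add_natCast_eq_mul_prod {z : ℝ} (hz : 0 < z) (j : ℕ) :
    Gamma (z + j) = Gamma z * ∏ i ∈ range j, (z + i) := by
  induction j with
  | zero => simp
  | succ j ih =>
    rw [Nat.cast_succ, ← add_assoc, Gamma_add_one (by positivity), ih, prod_range_succ]
    ring

lemma intervalIntegrable_sub_pow_mul_sub_rpow {μ : ℝ} (hμ : 0 < μ) (a x : ℝ) (k : ℕ) :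
    IntervalIntegrable (fun y => (y - a) ^ k * (x - y) ^ (μ - 1)) MeasureTheory.volume a x := by
  have h := (intervalIntegral.intervalIntegrable_rpow' (a := x - a) (b := x - x)
    (by linarith : -1 < μ - 1)).comp_sub_left x
  simp only [sub_sub_cancel] at h
  exact h.continuousOn_mul (by fun_prop)

lemma fracInt_sub_pow {μ : ℝ} (hμ : 0 < μ) {a x : ℝ} (hx : a < x) (k : ℕ) :
    fracInt a μ (fun y => (y - a) ^ k) x =
      k.factorial / Gamma (k + 1 + μ) * (x - a) ^ ((k : ℝ) + μ) := by
  have hc : 0 < x - a := sub_pos.2 hx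
  have hsub := intervalIntegral.integral_comp_mul_add
    (fun y => (y - a) ^ k * (x - y) ^ (μ - 1)) hc.ne' a (a := 0) (b := 1)
  simp only [mul_zero, zero_add, mul_one, sub_add_cancel, smul_eq_mul] at hsub
  have hcongr :
      ∫ t in (0 : ℝ)..1, ((x - a) * t + a - a) ^ k * (x - ((x - a) * t + a)) ^ (μ - 1) =
        (x - a) ^ ((k : ℝ) + μ - 1) *
          ∫ t in (0 : ℝ)..1, t ^ ((k + 1 : ℝ) - 1) * (1 - t) ^ (μ - 1) := by
    rw [← intervalIntegral.integral_const_mul]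
    refine intervalIntegral.integral_congr fun t ht => ?_
    rw [Set.uIcc_of_le zero_le_one] at ht
    rw [show (x - a) * t + a - a = (x - a) * t by ring,
      show x - ((x - a) * t + a) = (x - a) * (1 - t) by ring, add_sub_cancel_right,
      rpow_natCast, mul_pow, mul_rpow hc.le (sub_nonneg.2 ht.2),
      show (k : ℝ) + μ - 1 = k + (μ - 1) by ring, rpow_add hc, rpow_natCast]
    ring
  rw [hcongr, integral_rpow_mul_one_sub_rpow (by positivity) hμ, eq_inv_mul_iff_mul_eq₀ hc.ne',
    Gamma_nat_eq_factorial] at hsub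
  have hpow : (x - a) * (x - a) ^ ((k : ℝ) + μ - 1) = (x - a) ^ ((k : ℝ) + μ) := by
    rw [mul_comm, ← rpow_add_one hc.ne', sub_add_cancel]
  rw [fracInt, ← hsub, ← mul_assoc (x - a), hpow]
  field_simp [(Gamma_pos_of_pos hμ).ne']

lemma fracInt_finset_sum {ι : Type*} (a ρ x : ℝ) (s : Finset ι) (f : ι → ℝ) (u : ι → ℝ → ℝ)
    (hu : ∀ i ∈ s,
      IntervalIntegrable (fun y => u i y * (x - y) ^ (ρ - 1)) MeasureTheory.volume a x) :
    fracInt a ρ (fun y => ∑ i ∈ s, f i * u i y) x =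
      ∑ i ∈ s, f i * fracInt a ρ (u i) x := by
  simp only [fracInt, sum_mul, mul_assoc]
  rw [intervalIntegral.integral_finsetSum fun i hi => (hu i hi).const_mul (f i), mul_sum]
  simp only [intervalIntegral.integral_const_mul]
  exact sum_congr rfl fun i _ => by ring

lemma fracIntHat_sum_mul_one_add_pow {ι : Type*} {μ : ℝ} (hμ : 0 < μ) (s : Finset ι)
    (f : ι → ℝ) (e : ι → ℕ) {x : ℝ} (hx : -1 < x) :
    fracIntHat μ (fun y => ∑ i ∈ s, f i * (1 + y) ^ e i) x =
      ∑ i ∈ s, f i * ((e i).factorial / Gamma (e i + 1 + μ)) * (1 + x) ^ e i := by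
  have hc : 0 < 1 + x := by linarith
  have hfun : (fun y : ℝ => ∑ i ∈ s, f i * (1 + y) ^ e i) =
      fun y => ∑ i ∈ s, f i * (fun y : ℝ => (y - -1) ^ e i) y := by
    simp only [sub_neg_eq_add, add_comm _ (1 : ℝ)]
  rw [fracIntHat, hfun, fracInt_finset_sum _ _ _ _ _ _
    fun i _ => intervalIntegrable_sub_pow_mul_sub_rpow hμ _ _ _, mul_sum]
  refine sum_congr rfl fun i _ => ?_
  rw [fracInt_sub_pow hμ hx, sub_neg_eq_add, add_comm x, rpow_add hc, rpow_natCast]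
  have hinv : (1 + x) ^ (-μ) * (1 + x) ^ μ = 1 := by
    rw [← rpow_add hc, neg_add_cancel, rpow_zero]
  linear_combination (f i * ((e i).factorial / Gamma (e i + 1 + μ)) * (1 + x) ^ e i) * hinv

lemma jacobiCoeff_mul_factorial_div_Gamma {μ : ℝ} (hμ : 0 < μ) {n k : ℕ} (hk : k ≤ n) :
    jacobiCoeff n μ 1 k * ((k + 1).factorial / Gamma (((k + 1 : ℕ) : ℝ) + 1 + μ)) =
      (n + 1).factorial / Gamma (n + μ + 2) * jacobiCoeff n 0 (1 + μ) k := by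
  have hcast : (k : ℝ) + ((n - k : ℕ) : ℝ) = n := by rw [Nat.cast_sub hk]; ring
  have hfact : ((k + 1).factorial : ℝ) * ∏ i ∈ range (n - k), (1 + k + 1 + i : ℝ) =
      (n + 1).factorial := by
    have h := Gamma_add_natCast_eq_mul_prod (z := k + 2) (by positivity) (n - k)
    rw [add_right_comm, hcast, show (n : ℝ) + 2 = ((n + 1 : ℕ) : ℝ) + 1 by push_cast; ring,
      show (k : ℝ) + 2 = ((k + 1 : ℕ) : ℝ) + 1 by push_cast; ring, Gamma_nat_eq_factorial,
      Gamma_nat_eq_factorial] at h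
    rw [h]
    exact congrArg _ (prod_congr rfl fun i _ => by push_cast; ring)
  have hGamma : Gamma (n + μ + 2) =
      Gamma (μ + k + 2) * ∏ i ∈ range (n - k), (1 + μ + k + 1 + i) := by
    have h := Gamma_add_natCast_eq_mul_prod (z := μ + k + 2) (by positivity) (n - k)
    rw [show μ + k + 2 + ((n - k : ℕ) : ℝ) = n + μ + 2 by linear_combination hcast] at h
    rw [h]
    exact congrArg _ (prod_congr rfl fun i _ => by ring)
  have hprod :
      ∏ i ∈ range k, (1 + μ + n + 1 + i) = ∏ i ∈ range k, (1 + μ + 0 + n + 1 + i : ℝ) :=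
    prod_congr rfl fun i _ => by ring
  have hpos : 0 < ∏ i ∈ range (n - k), (1 + μ + k + 1 + i : ℝ) :=
    prod_pos fun i _ => by positivity
  rw [hGamma, ← hfact, jacobiCoeff, jacobiCoeff, hprod,
    show ((k + 1 : ℕ) : ℝ) + 1 + μ = μ + k + 2 by push_cast; ring]
  field_simp

noncomputable def fracIntHatPoly (μ : ℝ) (p : ℝ[X]) : ℝ[X] :=
  ∑ k ∈ range (p.natDegree + 1),
    C ((taylor (-1) p).coeff k * (k.factorial / Gamma (k + 1 + μ))) * (1 + X) ^ k

lemma natDegree_fracIntHatPoly_le (μ : ℝ) (p : ℝ[X]) :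
    (fracIntHatPoly μ p).natDegree ≤ p.natDegree := by
  refine natDegree_sum_le_of_forall_le _ _ fun k hk => (natDegree_C_mul_le _ _).trans ?_
  have hX : (1 + X : ℝ[X]).natDegree ≤ 1 := (natDegree_add_le _ _).trans (by simp)
  exact (natDegree_pow_le_of_le k hX).trans (by simpa [Nat.lt_succ_iff] using hk)

lemma eval_neg_one_fracIntHatPoly (μ : ℝ) (p : ℝ[X]) :
    (fracIntHatPoly μ p).eval (-1) = p.eval (-1) / Gamma (1 + μ) := by
  rw [fracIntHatPoly, eval_finsetSum, sum_range_succ', sum_eq_zero fun k _ => by simp]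
  simp [taylor_coeff_zero, div_eq_mul_inv]

lemma fracIntHat_eval {μ : ℝ} (hμ : 0 < μ) (p : ℝ[X]) {x : ℝ} (hx : -1 < x) :
    fracIntHat μ p.eval x = (fracIntHatPoly μ p).eval x := by
  have hp : p.eval =
      fun y => ∑ k ∈ range (p.natDegree + 1), (taylor (-1) p).coeff k * (1 + y) ^ k := by
    funext y
    rw [← eval_eq_sum_range' (by rw [natDegree_taylor]; omega), taylor_eval]
    ring_nf
  rw [hp, fracIntHat_sum_mul_one_add_pow hμ _ _ (fun k => k) hx, fracIntHatPoly, eval_finsetSum]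
  simp

theorem stmt13 (μ : ℝ) (hμ : 0 < μ) :
    (∀ n : ℕ, ∀ x ∈ Set.Ioo (-1 : ℝ) 1,
      fracIntHat μ (fun y => (1 + y) * jacobiP n μ 1 y) x
        = ((n + 1).factorial : ℝ) / Real.Gamma (n + μ + 2) * (1 + x) * jacobiP n 0 (1 + μ) x) ∧
    (∀ N : ℕ, ∀ p : Polynomial ℝ, p.natDegree ≤ N → p.eval (-1) = 0 →
      ∃ q : Polynomial ℝ, q.natDegree ≤ N ∧ q.eval (-1) = 0 ∧
        ∀ x ∈ Set.Ioo (-1 : ℝ) 1, fracIntHat μ (fun y => p.eval y) x = q.eval x) := by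
  refine ⟨fun n x hx => ?_, fun N p hdeg hp => ?_⟩
  · have hexpand : (fun y => (1 + y) * jacobiP n μ 1 y) =
        fun y => ∑ k ∈ range (n + 1), jacobiCoeff n μ 1 k * (1 + y) ^ (k + 1) := by
      funext y
      rw [jacobiP_eq_sum_jacobiCoeff_mul_one_add_pow, mul_sum]
      exact sum_congr rfl fun k _ => by ring
    rw [hexpand, fracIntHat_sum_mul_one_add_pow hμ _ _ (· + 1) hx.1,
      jacobiP_eq_sum_jacobiCoeff_mul_one_add_pow, mul_sum]
    refine sum_congr rfl fun k hk => ?_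
    rw [jacobiCoeff_mul_factorial_div_Gamma hμ (Nat.lt_succ_iff.1 (mem_range.1 hk))]
    ring
  · exact ⟨fracIntHatPoly μ p, (natDegree_fracIntHatPoly_le μ p).trans hdeg,
      by rw [eval_neg_one_fracIntHatPoly, hp, zero_div], fun x hx => fracIntHat_eval hμ p hx.1⟩
end
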